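/- Let (g, d, [·,·]) be a differential graded Lie algebra over a field k of characteristic zero, η : g → g a linear map of degree −1, μₙ the maps of Theorem 3.1, and R a local Artin k-algebra with maximal ideal m. Let γ₁,…,γ_N ∈ g¹ satisfy dγ_α = 0, let t¹,…,t^N ∈ m, and define Γ₁ = Σ_α t^α γ_α and, recursively, Γₙ = −½ η(Σ_{k=1}^{n−1} [Γₖ, Γ_{n−k}]) for n ≥ 2. Then Γ := Σ_{n≥1} Γₙ (a finite sum, since m is nilpotent) satisfies Γ + ½ η[Γ,Γ] = Γ₁, and Γ satisfies the L∞ Maurer–Cartan equation Σ_{k≥1} ((−1)^{k(k+1)/2}/k!) μₖ(Γ,…,Γ) = 0. -/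

import Mathlib

open Finset
open scoped TensorProduct

noncomputable section

/-- The Koszul sign `e(σ; v₁,…,vₙ)` of a permutation `σ` with respect to the (integer)
degrees `deg i` of homogeneous elements, defined by
`v_{σ(1)} ∧ … ∧ v_{σ(n)} = (-1)^σ e(σ) v₁ ∧ … ∧ vₙ`. -/
def koszulSign (k : Type*) [Field k] {n : ℕ} (deg : Fin n → ℤ) (σ : Equiv.Perm (Fin n)) : k :=
  ∏ p ∈ Finset.univ.filter (fun p : Fin n × Fin n => p.1 < p.2 ∧ σ p.2 < σ p.1),
    (-1 : k) ^ (deg (σ p.1) * deg (σ p.2))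

/-- The sign `(-1)^σ` of a permutation, as an element of the field `k`. -/
def permSign (k : Type*) [Field k] {n : ℕ} (σ : Equiv.Perm (Fin n)) : k :=
  ((Equiv.Perm.sign σ : ℤ) : k)

/-- `Sh(p,n)`: the permutations of `{0,…,n-1}` that are strictly increasing on the first `p`
positions and on the remaining `n - p` positions. -/
def shuffles (p n : ℕ) : Finset (Equiv.Perm (Fin n)) :=
  Finset.univ.filter fun σ =>
    (∀ a b : Fin n, (a : ℕ) < (b : ℕ) → (b : ℕ) < p → σ a < σ b) ∧
    (∀ a b : Fin n, (a : ℕ) < (b : ℕ) → p ≤ (a : ℕ) → σ a < σ b)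

/-- A differential graded Lie algebra over `k` on the carrier `V`, presented by its
(internal) ℤ-grading, differential `d` of degree `+1` and bracket of degree `0`,
satisfying graded antisymmetry, the graded Jacobi identity and the graded Leibniz rule. -/
structure GradedDGLA (k V : Type*) [Field k] [AddCommGroup V] [Module k V] where
  grade : ℤ → Submodule k V
  internal : DirectSum.IsInternal grade
  d : V →ₗ[k] V
  bracket : V →ₗ[k] V →ₗ[k] V
  d_grade : ∀ (i : ℤ) (v : V), v ∈ grade i → d v ∈ grade (i + 1)
  bracket_grade : ∀ (i j : ℤ) (x y : V), x ∈ grade i → y ∈ grade j →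
    bracket x y ∈ grade (i + j)
  d_sq : ∀ v : V, d (d v) = 0
  antisymm : ∀ (i j : ℤ) (x y : V), x ∈ grade i → y ∈ grade j →
    bracket x y = -((-1 : k) ^ (i * j) • bracket y x)
  jacobi : ∀ (i j l : ℤ) (x y z : V), x ∈ grade i → y ∈ grade j → z ∈ grade l →
    (-1 : k) ^ (i * l) • bracket (bracket x y) z
      + (-1 : k) ^ (j * i) • bracket (bracket y z) x
      + (-1 : k) ^ (l * j) • bracket (bracket z x) y = 0
  leibniz : ∀ (i : ℤ) (x y : V), x ∈ grade i →
    d (bracket x y) = bracket (d x) y + (-1 : k) ^ i • bracket x (d y)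

/-- The `L∞`-operations `μₙ` of Theorem 3.1, built from a differential `d`, a bracket `br`
and a degree `-1` operator `η`:  `μ₁ = d`, `μ₂ = (dη + ηd)[·,·]`, and for `n ≥ 3`
`μₙ(v₁,…,vₙ) = (-1)ⁿ ∑_{σ ∈ Sh(n-1,n)} (-1)^σ e(σ) η[μ_{n-1}(v_{σ(1)},…,v_{σ(n-1)}), v_{σ(n)}]`.
The arguments are homogeneous of degrees recorded in `deg`. -/
def muRec {k : Type*} [Field k] {W : Type*} [AddCommGroup W] [Module k W]
    (d : W →ₗ[k] W) (br : W →ₗ[k] W →ₗ[k] W) (η : W →ₗ[k] W) :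
    (n : ℕ) → (Fin n → ℤ) → (Fin n → W) → W
  | 0, _, _ => 0
  | 1, _, v => d (v 0)
  | 2, _, v => d (η (br (v 0) (v 1))) + η (d (br (v 0) (v 1)))
  | (n + 3), deg, v =>
      (-1 : k) ^ (n + 3) •
        ∑ σ ∈ shuffles (n + 2) (n + 3),
          (permSign k σ * koszulSign k deg σ) •
            η (br
                (muRec d br η (n + 2) (fun i => deg (σ i.castSucc))
                  (fun i => v (σ i.castSucc)))
                (v (σ (Fin.last (n + 2)))))

/-- The general right-hand side `∑_{k+l=n+1} ∑_{σ ∈ Sh(k,n)} (-1)^{σ + k(l-1)} e(σ)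
F_l(μ_k(v_{σ(1)},…,v_{σ(k)}), v_{σ(k+1)},…,v_{σ(n)})` appearing both in the higher Jacobi
identities (with `F = μ`) and in the `L∞`-morphism equations into an abelian dg Lie algebra. -/
def linfRHS (k : Type*) [Field k] {W : Type*} [AddCommGroup W] [Module k W]
    (μ F : (m : ℕ) → (Fin m → ℤ) → (Fin m → W) → W)
    (n : ℕ) (deg : Fin n → ℤ) (v : Fin n → W) : W :=
  ∑ p : Fin n, ∑ σ ∈ shuffles ((p : ℕ) + 1) n,
    (permSign k σ * (-1 : k) ^ (((p : ℕ) + 1) * (n - 1 - (p : ℕ))) * koszulSign k deg σ) •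
      F (n - (p : ℕ))
        (fun i =>
          if (i : ℕ) = 0 then
            (∑ j : Fin ((p : ℕ) + 1),
              deg (σ ⟨(j : ℕ), by have := j.isLt; have := p.isLt; omega⟩)) + 1 - ((p : ℕ) : ℤ)
          else
            deg (σ ⟨(p : ℕ) + (i : ℕ), by have := i.isLt; have := p.isLt; omega⟩))
        (fun i =>
          if (i : ℕ) = 0 then
            μ ((p : ℕ) + 1)
              (fun j => deg (σ ⟨(j : ℕ), by have := j.isLt; have := p.isLt; omega⟩))
              (fun j => v (σ ⟨(j : ℕ), by have := j.isLt; have := p.isLt; omega⟩))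
          else
            v (σ ⟨(p : ℕ) + (i : ℕ), by have := i.isLt; have := p.isLt; omega⟩))

/-- The `n`-th higher Jacobi expression `Φₙ` of a family `μ` of multilinear operations. -/
def higherJacobi (k : Type*) [Field k] {W : Type*} [AddCommGroup W] [Module k W]
    (μ : (m : ℕ) → (Fin m → ℤ) → (Fin m → W) → W)
    (n : ℕ) (deg : Fin n → ℤ) (v : Fin n → W) : W :=
  linfRHS k μ μ n deg v

/-- The bracket on `V ⊗[k] R` induced by a bracket on `V` and the multiplication of `R`:
`[x ⊗ a, y ⊗ b] = [x,y] ⊗ (a*b)`. -/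
def tensorBracket {k : Type*} [Field k] {V : Type*} [AddCommGroup V] [Module k V]
    {R : Type*} [CommRing R] [Algebra k R] (br : V →ₗ[k] V →ₗ[k] V) :
    (V ⊗[k] R) →ₗ[k] (V ⊗[k] R) →ₗ[k] (V ⊗[k] R) :=
  TensorProduct.curry
    ((TensorProduct.map (TensorProduct.lift br) (LinearMap.mul' k R)).comp
      (TensorProduct.tensorTensorTensorComm k V R V R).toLinearMap)

/-- The homogeneous piece `(g ⊗ m)ⁱ = gⁱ ⊗ m` of `V ⊗[k] R`: the image of `p ⊗ q` in
`V ⊗[k] R`, for a submodule `p ⊆ V` (a graded piece) and a `k`-submodule `q ⊆ R`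
(the maximal ideal). -/
def tensorGrade {k : Type*} [Field k] {V : Type*} [AddCommGroup V] [Module k V]
    {R : Type*} [CommRing R] [Algebra k R] (p : Submodule k V) (q : Submodule k R) :
    Submodule k (V ⊗[k] R) :=
  LinearMap.range (TensorProduct.map p.subtype q.subtype)

/-- The maximal ideal of a local `k`-algebra, viewed as a `k`-submodule. -/
def maxIdealSub (k : Type*) [Field k] (R : Type*) [CommRing R] [Algebra k R]
    [IsLocalRing R] : Submodule k R :=
  Submodule.restrictScalars k (IsLocalRing.maximalIdeal R)

/-- The coefficient `(-1)^{n(n+1)/2} / n!` of the `L∞` Maurer–Cartan equation. -/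
def mcCoeff (k : Type*) [Field k] (n : ℕ) : k :=
  (-1 : k) ^ (n * (n + 1) / 2) / (n.factorial : k)

/-- The terms `Γₙ` of the versal power series: `Γ₁` given, and
`Γₙ = -½ η (∑_{j=1}^{n-1} [Γⱼ, Γ_{n-j}])` for `n ≥ 2`. -/
def kuranishiSeries {k : Type*} [Field k] {W : Type*} [AddCommGroup W] [Module k W]
    (br : W →ₗ[k] W →ₗ[k] W) (η : W →ₗ[k] W) (Γt : W) : ℕ → W
  | 0 => 0
  | 1 => Γt
  | (n + 2) =>
      (-(1 : k) / 2) • η (∑ j ∈ (Finset.Icc 1 (n + 1)).attach,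
        br (kuranishiSeries br η Γt j.1) (kuranishiSeries br η Γt (n + 2 - j.1)))
  termination_by n => n
  decreasing_by
  · have := Finset.mem_Icc.mp j.2; omega
  · have := Finset.mem_Icc.mp j.2; omega


/-!
Write `Γ = Σₙ Γₙ`. The recursion for `Γₙ` is the degree-`n` part of
`Γ = Γ₁ - ½ η[Γ, Γ]`, and every bracket of total `m`-adic order at least `N` vanishes, so the
truncated sum satisfies this fixed-point equation exactly. Applying `d` (with `dΓ₁ = 0`) gives
`dΓ = -½ dη[Γ, Γ]`, and Leibniz plus antisymmetry in degree `1` give `d[Γ, Γ] = 2[dΓ, Γ]`.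
On arguments all equal to one element of degree `1` every Koszul sign cancels the permutation
sign, so `μₙ₊₁(Γ, …, Γ) = ±(n + 1) η[μₙ(Γ, …, Γ), Γ]`, and these factors are absorbed exactly
by the Maurer–Cartan coefficients: the partial sums `Sₙ` of the Maurer–Cartan series satisfy
`S₁ = -dΓ` and `Sₙ₊₁ = η[Sₙ, Γ]`. Hence `Sₙ ∈ g² ⊗ mⁿ⁺¹`, and `S_N = 0`.
-/

theorem koszulSign_const_one (k : Type*) [Field k] {n : ℕ} (σ : Equiv.Perm (Fin n)) :
    koszulSign k (fun _ => (1 : ℤ)) σ = permSign k σ := by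
  rw [koszulSign, permSign, σ.sign_eq_prod_prod_Iio, ← Finset.univ_product_univ,
    Finset.prod_filter, Finset.prod_product_right]
  push_cast
  refine Finset.prod_congr rfl fun j _ => ?_
  rw [← Finset.filter_gt_eq_Iio, Finset.prod_filter]
  refine Finset.prod_congr rfl fun i _ => ?_
  by_cases hij : i < j
  · rcases lt_or_gt_of_ne (σ.injective.ne hij.ne) with h | h <;> simp [hij, h, h.not_gt]
  · simp [hij]

theorem permSign_mul_self (k : Type*) [Field k] {n : ℕ} (σ : Equiv.Perm (Fin n)) :
    permSign k σ * permSign k σ = 1 := by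
  rw [permSign, ← Int.cast_mul, ← Units.val_mul, Int.units_mul_self, Units.val_one,
    Int.cast_one]

/-- The `(m, 1)`-shuffle that sends the last position to `j`. -/
def lastShuffle {m : ℕ} (j : Fin (m + 1)) : Equiv.Perm (Fin (m + 1)) :=
  (finRotate (m + 1)).trans j.cycleRange.symm

theorem lastShuffle_last {m : ℕ} (j : Fin (m + 1)) : lastShuffle j (Fin.last m) = j := by
  simp [lastShuffle, Fin.cycleRange_symm_zero]

theorem lastShuffle_castSucc {m : ℕ} (j : Fin (m + 1)) (i : Fin m) :
    lastShuffle j i.castSucc = j.succAbove i := by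
  have : finRotate (m + 1) i.castSucc = i.succ := Fin.ext (by simp)
  simp [lastShuffle, this, Fin.cycleRange_symm_succ]

theorem lastShuffle_mem_shuffles {m : ℕ} (j : Fin (m + 1)) :
    lastShuffle j ∈ shuffles m (m + 1) := by
  refine Finset.mem_filter.mpr ⟨Finset.mem_univ _, fun a b hab hbm => ?_, fun a b hab ha => ?_⟩
  · obtain ⟨a, rfl⟩ : ∃ a' : Fin m, a = a'.castSucc := ⟨⟨a, by omega⟩, rfl⟩
    obtain ⟨b, rfl⟩ : ∃ b' : Fin m, b = b'.castSucc := ⟨⟨b, hbm⟩, rfl⟩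
    rw [lastShuffle_castSucc, lastShuffle_castSucc]
    exact Fin.strictMono_succAbove j hab
  · omega

theorem eq_lastShuffle_of_mem_shuffles {m : ℕ} {σ : Equiv.Perm (Fin (m + 1))}
    (hσ : σ ∈ shuffles m (m + 1)) : σ = lastShuffle (σ (Fin.last m)) := by
  have hmono : StrictMono (fun i : Fin m => σ i.castSucc) := fun a b hab =>
    (Finset.mem_filter.mp hσ).2.1 _ _ hab b.isLt
  have hrange : Set.range (fun i : Fin m => σ i.castSucc) = {σ (Fin.last m)}ᶜ := by
    rw [Set.range_comp' σ, ← Fin.succAbove_last, Fin.range_succAbove, σ.image_compl,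
      Set.image_singleton]
  have hinit : (fun i : Fin m => σ i.castSucc) = (σ (Fin.last m)).succAbove :=
    (StrictMono.range_inj hmono (Fin.strictMono_succAbove _)).mp
      (by rw [hrange, Fin.range_succAbove])
  ext x
  induction x using Fin.lastCases with
  | last => rw [lastShuffle_last]
  | cast i => rw [lastShuffle_castSucc, ← hinit]

theorem card_shuffles_self_succ (m : ℕ) : (shuffles m (m + 1)).card = m + 1 := by
  calc (shuffles m (m + 1)).card = (Finset.univ : Finset (Fin (m + 1))).card :=
        Finset.card_bij' (fun σ _ => σ (Fin.last m)) (fun j _ => lastShuffle j)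
          (fun _ _ => Finset.mem_univ _) (fun j _ => lastShuffle_mem_shuffles j)
          (fun _ hσ => (eq_lastShuffle_of_mem_shuffles hσ).symm) (fun j _ => lastShuffle_last j)
    _ = m + 1 := by simp

theorem mcCoeff_add_two_mul (k : Type*) [Field k] [CharZero k] (n : ℕ) :
    mcCoeff k (n + 2) * ((-1) ^ (n + 2) * ((n + 2 : ℕ) : k)) = mcCoeff k (n + 1) := by
  have hexp : (n + 2) * (n + 2 + 1) / 2 = (n + 1) * (n + 1 + 1) / 2 + (n + 2) := by
    have := (Nat.even_mul_succ_self (n + 1)).two_dvd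
    have : (n + 2) * (n + 2 + 1) = (n + 1) * (n + 1 + 1) + 2 * (n + 2) := by ring
    omega
  have hsq : (-1 : k) ^ (n + 2) * (-1) ^ (n + 2) = 1 := by rw [← mul_pow]; simp
  have hn : ((n + 2 : ℕ) : k) ≠ 0 := Nat.cast_ne_zero.mpr (by omega)
  have hf : ((n + 1).factorial : k) ≠ 0 := Nat.cast_ne_zero.mpr (Nat.factorial_ne_zero _)
  rw [mcCoeff, mcCoeff, hexp, pow_add, show n + 2 = (n + 1).succ from rfl, Nat.factorial_succ,
    Nat.cast_mul]
  generalize (-1 : k) ^ (n + 1).succ = e at hsq ⊢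
  generalize (-1 : k) ^ ((n + 1) * (n + 1 + 1) / 2) = c
  field_simp
  linear_combination c * hsq

section MaurerCartan

variable {k W : Type*} [Field k] [AddCommGroup W] [Module k W]
  (d : W →ₗ[k] W) (br : W →ₗ[k] W →ₗ[k] W) (η : W →ₗ[k] W)

theorem muRec_add_three_const (x : W) (n : ℕ) :
    muRec d br η (n + 3) (fun _ => 1) (fun _ => x)
      = ((-1) ^ (n + 3) * ((n + 3 : ℕ) : k))
          • η (br (muRec d br η (n + 2) (fun _ => 1) (fun _ => x)) x) := by
  rw [muRec]
  simp only [koszulSign_const_one, permSign_mul_self, one_smul, Finset.sum_const,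
    card_shuffles_self_succ, ← Nat.cast_smul_eq_nsmul k, smul_smul]

def mcPartialSum (Γ : W) (n : ℕ) : W :=
  ∑ j ∈ Icc 1 n, mcCoeff k j • muRec d br η j (fun _ => 1) (fun _ => Γ)

theorem mcPartialSum_one (Γ : W) : mcPartialSum d br η Γ 1 = -d Γ := by
  simp [mcPartialSum, mcCoeff, muRec]

theorem mcPartialSum_add_one (Γ : W) (n : ℕ) :
    mcPartialSum d br η Γ (n + 1) = mcPartialSum d br η Γ n
      + mcCoeff k (n + 1) • muRec d br η (n + 1) (fun _ => 1) (fun _ => Γ) :=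
  Finset.sum_Icc_succ_top (by omega) _

theorem mcPartialSum_succ_eq_eta_bracket [CharZero k] {Γ : W}
    (hdΓ : d Γ = -((1 / 2 : k) • d (η (br Γ Γ))))
    (hdbr : d (br Γ Γ) = (2 : k) • br (d Γ) Γ) {n : ℕ} (hn : 1 ≤ n) :
    mcPartialSum d br η Γ (n + 1) = η (br (mcPartialSum d br η Γ n) Γ) := by
  induction n, hn using Nat.le_induction with
  | base =>
    have hc2 : mcCoeff k 2 = -(1 / 2) := by norm_num [mcCoeff, Nat.factorial]
    rw [mcPartialSum_add_one, mcPartialSum_one]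
    simp only [muRec, hc2, hdbr, map_smul, map_neg, LinearMap.neg_apply]
    rw [hdΓ]
    module
  | succ n hn ih =>
    obtain ⟨n, rfl⟩ : ∃ m, n = m + 1 := ⟨n - 1, by omega⟩
    conv_lhs => rw [mcPartialSum_add_one, ih, muRec_add_three_const, smul_smul,
      mcCoeff_add_two_mul]
    rw [mcPartialSum_add_one d br η Γ (n + 1)]
    simp only [map_add, LinearMap.add_apply, map_smul, LinearMap.smul_apply]

end MaurerCartan

theorem sum_range_sum_antidiagonal_eq_sum_range_sum_range {M : Type*} [AddCommMonoid M]
    (N : ℕ) (f : ℕ → ℕ → M) (hf : ∀ i j, N < i + j → f i j = 0) :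
    ∑ n ∈ range (N + 1), ∑ p ∈ antidiagonal n, f p.1 p.2
      = ∑ i ∈ range (N + 1), ∑ j ∈ range (N + 1), f i j := by
  rw [Finset.sum_sigma', ← Finset.sum_product', ← Finset.sum_filter_of_ne
    (p := fun p : ℕ × ℕ => p.1 + p.2 ≤ N) fun p _ h => by contrapose! h; exact hf _ _ h]
  refine Finset.sum_nbij' (fun x => x.2) (fun p => ⟨p.1 + p.2, p⟩) ?_ ?_ ?_ ?_ (fun _ _ => rfl)
  · rintro ⟨n, i, j⟩ h
    simp only [Finset.mem_sigma, Finset.mem_range, Finset.HasAntidiagonal.mem_antidiagonal] at h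
    simp only [Finset.mem_filter, Finset.mem_product, Finset.mem_range]
    omega
  · rintro ⟨i, j⟩ h
    simp only [Finset.mem_filter, Finset.mem_product, Finset.mem_range] at h
    simp only [Finset.mem_sigma, Finset.mem_range, Finset.HasAntidiagonal.mem_antidiagonal,
      and_true]
    omega
  · rintro ⟨n, p⟩ h
    simp only [Finset.mem_sigma, Finset.HasAntidiagonal.mem_antidiagonal] at h
    rw [h.2]
  · intro p _
    rfl

section Kuranishi

variable {k W : Type*} [Field k] [AddCommGroup W] [Module k W]
  (br : W →ₗ[k] W →ₗ[k] W) (η : W →ₗ[k] W) (Γ₁ : W)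

theorem kuranishiSeries_eq (n : ℕ) :
    kuranishiSeries br η Γ₁ n
      = (if n = 1 then Γ₁ else 0) + (-(1 : k) / 2) • η (∑ p ∈ antidiagonal n,
          br (kuranishiSeries br η Γ₁ p.1) (kuranishiSeries br η Γ₁ p.2)) := by
  set G := kuranishiSeries br η Γ₁
  have hG0 : G 0 = 0 := by simp [G, kuranishiSeries]
  match n with
  | 0 => simp [hG0]
  | 1 => simp [G, kuranishiSeries, Finset.Nat.antidiagonal_succ]
  | n + 2 =>
    rw [if_neg (by omega), zero_add, Finset.Nat.sum_antidiagonal_eq_sum_range_succ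
      (fun i j => br (G i) (G j))]
    simp only [G]
    rw [kuranishiSeries, Finset.sum_attach (Finset.Icc 1 (n + 1))
      (fun j => br (kuranishiSeries br η Γ₁ j) (kuranishiSeries br η Γ₁ (n + 2 - j)))]
    congr 2
    refine Finset.sum_subset (fun j hj => ?_) (fun j hj hj' => ?_)
    · simp only [Finset.mem_Icc, Finset.mem_range] at hj ⊢; omega
    · simp only [Finset.mem_Icc, Finset.mem_range] at hj hj'
      rcases Nat.lt_or_ge j 1 with h | h
      · obtain rfl : j = 0 := by omega
        simp [kuranishiSeries]
      · obtain rfl : j = n + 2 := by omega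
        simp [kuranishiSeries]

theorem sum_kuranishiSeries_add_half_bracket {N : ℕ} (hN : 1 ≤ N)
    (hvanish : ∀ i j, N < i + j →
      br (kuranishiSeries br η Γ₁ i) (kuranishiSeries br η Γ₁ j) = 0) :
    (∑ n ∈ Icc 1 N, kuranishiSeries br η Γ₁ n)
      + (1 / 2 : k) • η (br (∑ n ∈ Icc 1 N, kuranishiSeries br η Γ₁ n)
          (∑ n ∈ Icc 1 N, kuranishiSeries br η Γ₁ n)) = Γ₁ := by
  set G := kuranishiSeries br η Γ₁
  have hsum : ∑ n ∈ Icc 1 N, G n = ∑ n ∈ range (N + 1), G n := by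
    refine Finset.sum_subset (fun n hn => ?_) (fun n hn hn' => ?_)
    · simp only [Finset.mem_Icc, Finset.mem_range] at hn ⊢; omega
    · obtain rfl : n = 0 := by simp only [Finset.mem_Icc, Finset.mem_range] at hn hn'; omega
      simp [G, kuranishiSeries]
  have hbr : br (∑ n ∈ range (N + 1), G n) (∑ n ∈ range (N + 1), G n)
      = ∑ n ∈ range (N + 1), ∑ p ∈ antidiagonal n, br (G p.1) (G p.2) := by
    rw [sum_range_sum_antidiagonal_eq_sum_range_sum_range N _ hvanish]
    simp only [map_sum, LinearMap.sum_apply]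
    exact Finset.sum_comm
  conv_lhs =>
    rw [hsum, hbr]
    enter [1]
    rw [Finset.sum_congr rfl fun n _ => kuranishiSeries_eq br η Γ₁ n]
  rw [Finset.sum_add_distrib, Finset.sum_ite_eq', if_pos (by simp; omega), ← Finset.smul_sum,
    ← map_sum]
  module

end Kuranishi

section TensorGrade

variable {k V R : Type*} [Field k] [AddCommGroup V] [Module k V] [CommRing R] [Algebra k R]

theorem tensorBracket_tmul (br : V →ₗ[k] V →ₗ[k] V) (v w : V) (r s : R) :
    tensorBracket br (v ⊗ₜ[k] r) (w ⊗ₜ[k] s) = br v w ⊗ₜ[k] (r * s) := by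
  simp [tensorBracket]

theorem tmul_mem_tensorGrade {p : Submodule k V} {q : Submodule k R} {v : V} {r : R}
    (hv : v ∈ p) (hr : r ∈ q) : v ⊗ₜ[k] r ∈ tensorGrade p q :=
  ⟨⟨v, hv⟩ ⊗ₜ ⟨r, hr⟩, rfl⟩

theorem tensorGrade_eq_span (p : Submodule k V) (q : Submodule k R) :
    tensorGrade p q = Submodule.span k {x | ∃ v ∈ p, ∃ r ∈ q, v ⊗ₜ[k] r = x} := by
  rw [tensorGrade, TensorProduct.range_map_eq_span_tmul]
  congr 1
  ext x
  simp

@[elab_as_elim]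
theorem tensorGrade_induction {p : Submodule k V} {q : Submodule k R}
    {P : (x : V ⊗[k] R) → x ∈ tensorGrade p q → Prop}
    (tmul : ∀ v (hv : v ∈ p) r (hr : r ∈ q), P (v ⊗ₜ[k] r) (tmul_mem_tensorGrade hv hr))
    (zero : P 0 (zero_mem _))
    (add : ∀ x y hx hy, P x hx → P y hy → P (x + y) (add_mem hx hy))
    (smul : ∀ (c : k) x hx, P x hx → P (c • x) (Submodule.smul_mem _ c hx))
    {x : V ⊗[k] R} (hx : x ∈ tensorGrade p q) : P x hx := by
  have hspan := tensorGrade_eq_span p q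
  suffices ∀ x (hx : x ∈ Submodule.span k {x | ∃ v ∈ p, ∃ r ∈ q, v ⊗ₜ[k] r = x}),
      P x (hspan ▸ hx) from this x (hspan ▸ hx)
  intro x hx
  induction hx using Submodule.span_induction with
  | mem x h => obtain ⟨v, hv, r, hr, rfl⟩ := h; exact tmul v hv r hr
  | zero => exact zero
  | add x y _ _ hx hy => exact add x y _ _ hx hy
  | smul c x _ hx => exact smul c x _ hx

theorem tensorGrade_mono {p p' : Submodule k V} {q q' : Submodule k R} (hp : p ≤ p')
    (hq : q ≤ q') : tensorGrade p q ≤ tensorGrade p' q' := fun _ hx =>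
  tensorGrade_induction (fun _ hv _ hr => tmul_mem_tensorGrade (hp hv) (hq hr)) (zero_mem _)
    (fun _ _ _ _ => add_mem) (fun c _ _ => Submodule.smul_mem _ c) hx

theorem tensorGrade_bot_right (p : Submodule k V) : tensorGrade p (⊥ : Submodule k R) = ⊥ :=
  eq_bot_iff.mpr fun _ hx => tensorGrade_induction
    (fun _ _ r hr => by simp [(Submodule.mem_bot k).mp hr]) (zero_mem _)
    (fun _ _ _ _ => add_mem) (fun c _ _ => Submodule.smul_mem _ c) hx

theorem eq_zero_of_mem_tensorGrade_pow {p : Submodule k V} {I : Ideal R} {N a : ℕ}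
    (hI : I ^ N = ⊥) (ha : N ≤ a) {x : V ⊗[k] R}
    (hx : x ∈ tensorGrade p ((I ^ a).restrictScalars k)) : x = 0 := by
  have hle : (I ^ a).restrictScalars k ≤ (⊥ : Submodule k R) := fun r hr => by
    simpa [hI] using Ideal.pow_le_pow_right ha hr
  simpa [tensorGrade_bot_right] using tensorGrade_mono le_rfl hle hx

theorem rTensor_mem_tensorGrade {f : V →ₗ[k] V} {p p' : Submodule k V}
    (hf : ∀ v ∈ p, f v ∈ p') {q : Submodule k R} {x : V ⊗[k] R}
    (hx : x ∈ tensorGrade p q) : f.rTensor R x ∈ tensorGrade p' q :=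
  tensorGrade_induction (fun v hv r hr => by simpa using tmul_mem_tensorGrade (hf v hv) hr)
    (by simp) (fun _ _ _ _ hx hy => by simpa using add_mem hx hy)
    (fun c _ _ hx => by simpa using Submodule.smul_mem _ c hx) hx

theorem tensorBracket_mem_tensorGrade {br : V →ₗ[k] V →ₗ[k] V} {p p' p'' : Submodule k V}
    (hbr : ∀ v ∈ p, ∀ w ∈ p', br v w ∈ p'') {I J : Ideal R} {x y : V ⊗[k] R}
    (hx : x ∈ tensorGrade p (I.restrictScalars k))
    (hy : y ∈ tensorGrade p' (J.restrictScalars k)) :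
    tensorBracket br x y ∈ tensorGrade p'' ((I * J).restrictScalars k) := by
  induction hx using tensorGrade_induction with
  | tmul v hv r hr =>
    induction hy using tensorGrade_induction with
    | tmul w hw s hs =>
      rw [tensorBracket_tmul]
      exact tmul_mem_tensorGrade (hbr v hv w hw) (Ideal.mul_mem_mul hr hs)
    | zero => simp
    | add y y' _ _ hy hy' => simpa using add_mem hy hy'
    | smul c y _ hy => simpa using Submodule.smul_mem _ c hy
  | zero => simp
  | add x x' _ _ hx hx' => simpa using add_mem hx hx'
  | smul c x _ hx => simpa using Submodule.smul_mem _ c hx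

theorem kuranishiSeries_mem_tensorGrade {br : V →ₗ[k] V →ₗ[k] V} {η : V →ₗ[k] V}
    {p₁ p₂ : Submodule k V} (hbr : ∀ v ∈ p₁, ∀ w ∈ p₁, br v w ∈ p₂)
    (hη : ∀ v ∈ p₂, η v ∈ p₁) {I : Ideal R} {Γ₁ : V ⊗[k] R}
    (hΓ₁ : Γ₁ ∈ tensorGrade p₁ (I.restrictScalars k)) (n : ℕ) :
    kuranishiSeries (tensorBracket br) (η.rTensor R) Γ₁ n
      ∈ tensorGrade p₁ ((I ^ n).restrictScalars k) := by
  induction n using Nat.strong_induction_on with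
  | _ n ih =>
    rw [kuranishiSeries_eq]
    refine add_mem ?_ (Submodule.smul_mem _ _ (rTensor_mem_tensorGrade hη
      (Submodule.sum_mem _ fun p hp => ?_)))
    · split_ifs with h
      · simpa [h] using hΓ₁
      · exact zero_mem _
    · rw [Finset.HasAntidiagonal.mem_antidiagonal] at hp
      rcases Nat.eq_zero_or_pos p.1 with h1 | h1
      · simp [h1, kuranishiSeries]
      rcases Nat.eq_zero_or_pos p.2 with h2 | h2
      · simp [h2, kuranishiSeries]
      rw [← hp, pow_add]
      exact tensorBracket_mem_tensorGrade hbr (ih _ (by omega)) (ih _ (by omega))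

variable (D : GradedDGLA k V)

theorem tensorBracket_leibniz {i : ℤ} {q : Submodule k R} {x : V ⊗[k] R}
    (hx : x ∈ tensorGrade (D.grade i) q) (y : V ⊗[k] R) :
    D.d.rTensor R (tensorBracket D.bracket x y)
      = tensorBracket D.bracket (D.d.rTensor R x) y
        + (-1 : k) ^ i • tensorBracket D.bracket x (D.d.rTensor R y) := by
  induction hx using tensorGrade_induction with
  | tmul v hv r _ =>
    induction y using TensorProduct.induction_on with
    | zero => simp
    | tmul w s =>
      simp only [LinearMap.rTensor_tmul, tensorBracket_tmul, D.leibniz i v w hv,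
        TensorProduct.add_tmul, TensorProduct.smul_tmul']
    | add y y' hy hy' => simp only [map_add, hy, hy', smul_add]; abel
  | zero => simp
  | add x x' _ _ hx hx' => simp only [map_add, LinearMap.add_apply, hx, hx', smul_add]; abel
  | smul c x _ hx => simp only [map_smul, LinearMap.smul_apply, hx, smul_add, smul_comm c]

theorem tensorBracket_antisymm {i j : ℤ} {q q' : Submodule k R} {x y : V ⊗[k] R}
    (hx : x ∈ tensorGrade (D.grade i) q) (hy : y ∈ tensorGrade (D.grade j) q') :
    tensorBracket D.bracket x y = -((-1 : k) ^ (i * j) • tensorBracket D.bracket y x) := by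
  induction hx using tensorGrade_induction with
  | tmul v hv r _ =>
    induction hy using tensorGrade_induction with
    | tmul w hw s _ =>
      rw [tensorBracket_tmul, tensorBracket_tmul, D.antisymm i j v w hv hw, mul_comm s r,
        TensorProduct.neg_tmul, TensorProduct.smul_tmul']
    | zero => simp
    | add y y' _ _ hy hy' => simp only [map_add, LinearMap.add_apply, hy, hy', smul_add]; abel
    | smul c y _ hy => simp only [map_smul, LinearMap.smul_apply, hy, smul_neg, smul_comm c]
  | zero => simp
  | add x x' _ _ hx hx' => simp only [map_add, LinearMap.add_apply, hx, hx', smul_add]; abel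
  | smul c x _ hx => simp only [map_smul, LinearMap.smul_apply, hx, smul_neg, smul_comm c]

theorem rTensor_d_tensorBracket_self {q : Submodule k R} {x : V ⊗[k] R}
    (hx : x ∈ tensorGrade (D.grade 1) q) :
    D.d.rTensor R (tensorBracket D.bracket x x)
      = (2 : k) • tensorBracket D.bracket (D.d.rTensor R x) x := by
  have hdx : D.d.rTensor R x ∈ tensorGrade (D.grade 2) q :=
    rTensor_mem_tensorGrade (fun v hv => by simpa using D.d_grade 1 v hv) hx
  rw [tensorBracket_leibniz D hx, tensorBracket_antisymm D hx hdx]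
  norm_num [two_smul]

theorem mcPartialSum_mem_tensorGrade [CharZero k] {η : V →ₗ[k] V}
    (hη : ∀ (i : ℤ) (v : V), v ∈ D.grade i → η v ∈ D.grade (i - 1)) {I : Ideal R}
    {Γ : V ⊗[k] R} (hΓ : Γ ∈ tensorGrade (D.grade 1) (I.restrictScalars k))
    (hdΓ : D.d.rTensor R Γ
      = -((1 / 2 : k) • D.d.rTensor R (η.rTensor R (tensorBracket D.bracket Γ Γ))))
    {n : ℕ} (hn : 1 ≤ n) :
    mcPartialSum (D.d.rTensor R) (tensorBracket D.bracket) (η.rTensor R) Γ n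
      ∈ tensorGrade (D.grade 2) ((I ^ (n + 1)).restrictScalars k) := by
  induction n, hn using Nat.le_induction with
  | base =>
    have hΓΓ : tensorBracket D.bracket Γ Γ
        ∈ tensorGrade (D.grade 2) ((I ^ 2).restrictScalars k) := by
      rw [pow_two]
      exact tensorBracket_mem_tensorGrade
        (fun v hv w hw => by simpa using D.bracket_grade 1 1 v w hv hw) hΓ hΓ
    rw [mcPartialSum_one, hdΓ, neg_neg]
    exact Submodule.smul_mem _ _ (rTensor_mem_tensorGrade
      (fun v hv => by simpa using D.d_grade 1 v hv)
      (rTensor_mem_tensorGrade (fun v hv => by simpa using hη 2 v hv) hΓΓ))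
  | succ n hn ih =>
    rw [mcPartialSum_succ_eq_eta_bracket _ _ _ hdΓ (rTensor_d_tensorBracket_self D hΓ) hn,
      pow_succ]
    exact rTensor_mem_tensorGrade (fun v hv => by simpa using hη 3 v hv)
      (tensorBracket_mem_tensorGrade
        (fun v hv w hw => by simpa using D.bracket_grade 2 1 v w hv hw) ih hΓ)

end TensorGrade

theorem statement5_general {k V : Type*} [Field k] [CharZero k] [AddCommGroup V] [Module k V]
    (D : GradedDGLA k V) (η : V →ₗ[k] V)
    (hη : ∀ (i : ℤ) (v : V), v ∈ D.grade i → η v ∈ D.grade (i - 1))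
    (R : Type*) [CommRing R] [Algebra k R] [IsLocalRing R]
    (N : ℕ) (hN : IsLocalRing.maximalIdeal R ^ N = ⊥)
    (M : ℕ) (γ : Fin M → V) (hγ : ∀ a, γ a ∈ D.grade 1) (hdγ : ∀ a, D.d (γ a) = 0)
    (t : Fin M → R) (ht : ∀ a, t a ∈ IsLocalRing.maximalIdeal R) :
    (∑ n ∈ Finset.Icc 1 N,
        kuranishiSeries (tensorBracket D.bracket) (LinearMap.rTensor R η)
          (∑ a, γ a ⊗ₜ[k] t a) n)
      + (1 / 2 : k) • (LinearMap.rTensor R η)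
          (tensorBracket D.bracket
            (∑ n ∈ Finset.Icc 1 N,
              kuranishiSeries (tensorBracket D.bracket) (LinearMap.rTensor R η)
                (∑ a, γ a ⊗ₜ[k] t a) n)
            (∑ n ∈ Finset.Icc 1 N,
              kuranishiSeries (tensorBracket D.bracket) (LinearMap.rTensor R η)
                (∑ a, γ a ⊗ₜ[k] t a) n))
      = ∑ a, γ a ⊗ₜ[k] t a
    ∧ (∑ n ∈ Finset.Icc 1 N, mcCoeff k n •
          muRec (LinearMap.rTensor R D.d) (tensorBracket D.bracket) (LinearMap.rTensor R η)
            n (fun _ => (1 : ℤ))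
            (fun _ => ∑ m ∈ Finset.Icc 1 N,
              kuranishiSeries (tensorBracket D.bracket) (LinearMap.rTensor R η)
                (∑ a, γ a ⊗ₜ[k] t a) m)) = 0 := by
  set m := IsLocalRing.maximalIdeal R
  set br := tensorBracket (R := R) D.bracket
  set Γ₁ := ∑ a, γ a ⊗ₜ[k] t a
  set G := kuranishiSeries br (η.rTensor R) Γ₁
  set Γ := ∑ n ∈ Icc 1 N, G n
  have hN1 : 1 ≤ N := Nat.one_le_iff_ne_zero.mpr (by rintro rfl; simp at hN)
  have hbr : ∀ v ∈ D.grade 1, ∀ w ∈ D.grade 1, D.bracket v w ∈ D.grade 2 :=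
    fun v hv w hw => by simpa using D.bracket_grade 1 1 v w hv hw
  have hG : ∀ n, G n ∈ tensorGrade (D.grade 1) ((m ^ n).restrictScalars k) :=
    kuranishiSeries_mem_tensorGrade hbr (fun v hv => by simpa using hη 2 v hv)
      (Submodule.sum_mem _ fun a _ => tmul_mem_tensorGrade (hγ a) (ht a))
  have hΓ : Γ ∈ tensorGrade (D.grade 1) (m.restrictScalars k) :=
    Submodule.sum_mem _ fun n hn => tensorGrade_mono le_rfl (Submodule.restrictScalars_mono k
      (Ideal.pow_le_self (by simp at hn; omega))) (hG n)
  have hfix : Γ + (1 / 2 : k) • η.rTensor R (br Γ Γ) = Γ₁ :=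
    sum_kuranishiSeries_add_half_bracket br _ Γ₁ hN1 fun i j hij =>
      eq_zero_of_mem_tensorGrade_pow hN hij.le
        (pow_add m i j ▸ tensorBracket_mem_tensorGrade hbr (hG i) (hG j))
  refine ⟨hfix, ?_⟩
  have hdΓ₁ : D.d.rTensor R Γ₁ = 0 := by simp [Γ₁, hdγ]
  have hdΓ : D.d.rTensor R Γ = -((1 / 2 : k) • D.d.rTensor R (η.rTensor R (br Γ Γ))) := by
    conv_lhs => rw [eq_sub_of_add_eq hfix, map_sub, hdΓ₁, zero_sub, map_smul]
  exact eq_zero_of_mem_tensorGrade_pow hN (by omega)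
    (mcPartialSum_mem_tensorGrade D hη hΓ hdΓ hN1)

theorem statement5 {k V : Type*} [Field k] [CharZero k] [AddCommGroup V] [Module k V]
    (D : GradedDGLA k V) (η : V →ₗ[k] V)
    (hη : ∀ (i : ℤ) (v : V), v ∈ D.grade i → η v ∈ D.grade (i - 1))
    (R : Type*) [CommRing R] [Algebra k R] [IsLocalRing R] [IsArtinianRing R]
    (N : ℕ) (hN : IsLocalRing.maximalIdeal R ^ N = ⊥)
    (M : ℕ) (γ : Fin M → V) (hγ : ∀ a, γ a ∈ D.grade 1) (hdγ : ∀ a, D.d (γ a) = 0)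
    (t : Fin M → R) (ht : ∀ a, t a ∈ IsLocalRing.maximalIdeal R) :
    (∑ n ∈ Finset.Icc 1 N,
        kuranishiSeries (tensorBracket D.bracket) (LinearMap.rTensor R η)
          (∑ a, γ a ⊗ₜ[k] t a) n)
      + (1 / 2 : k) • (LinearMap.rTensor R η)
          (tensorBracket D.bracket
            (∑ n ∈ Finset.Icc 1 N,
              kuranishiSeries (tensorBracket D.bracket) (LinearMap.rTensor R η)
                (∑ a, γ a ⊗ₜ[k] t a) n)
            (∑ n ∈ Finset.Icc 1 N,
              kuranishiSeries (tensorBracket D.bracket) (LinearMap.rTensor R η)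
                (∑ a, γ a ⊗ₜ[k] t a) n))
      = ∑ a, γ a ⊗ₜ[k] t a
    ∧ (∑ n ∈ Finset.Icc 1 N, mcCoeff k n •
          muRec (LinearMap.rTensor R D.d) (tensorBracket D.bracket) (LinearMap.rTensor R η)
            n (fun _ => (1 : ℤ))
            (fun _ => ∑ m ∈ Finset.Icc 1 N,
              kuranishiSeries (tensorBracket D.bracket) (LinearMap.rTensor R η)
                (∑ a, γ a ⊗ₜ[k] t a) m)) = 0 :=
  statement5_general D η hη R N hN M γ hγ hdγ t ht
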